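/- arXiv:1601.05309 — 2 statements merged into one kernel-verified Lean document; each statement's English description precedes it below -/
import Mathlib

section
/- Let G(x) = Φ(x) be the standard normal CDF and define, for Δ > 0, the function H_Δ(x) = ½·Φ(x + Δ/2) + ½·Φ(x − Δ/2) (the CDF of an equal mixture of two unit Gaussians at ±Δ/2 convolved appropriately). Then the maximum over x of |H_Δ(x) − Φ(x)| satisfies lim_{Δ→0⁺} (sup_x |H_Δ(x) − Φ(x)|)/Δ² = 1/(8√(2πe)). -/
/-!
Write `D(x, h) = ½Φ(x + h) + ½Φ(x - h) - Φ(x)`. Since `Φ'' = φ'`, the second difference is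
`2 D(x, h) = ∫₀ʰ (φ(x + t) - φ(x - t)) dt`, and `φ(x + t) - φ(x - t)` is `2t` times an average of
`φ'` over `[x - t, x + t]`. Now `|φ'(s)| = |s| φ(s)` is maximal at `s = 1`, so
`|D(x, h)| ≤ φ(1) h² / 2` for every `x`; at `x = 1` the derivative `φ'` stays close to `-φ(1)` on
`[1 - h, 1 + h]`, so `|D(1, h)| ≥ (1 - h) φ(1 + h) h² / 2`. With `h = Δ / 2` both bounds are
`φ(1) Δ² / 8 + o(Δ²)`, and `φ(1) = 1 / √(2πe)`.
-/

open MeasureTheory Real Filter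

/-- The standard normal cumulative distribution function. -/
noncomputable def stdNormalCDF (x : ℝ) : ℝ :=
  ∫ t in Set.Iic x, Real.exp (-t ^ 2 / 2) / Real.sqrt (2 * Real.pi)

open Set intervalIntegral Topology

section SecondDifference

variable {F f g : ℝ → ℝ} {x h : ℝ}

theorem add_sub_two_mul_eq_integral (hF : ∀ t, HasDerivAt F (f t) t) (hf : Continuous f) :
    F (x + h) + F (x - h) - 2 * F x = ∫ t in (0 : ℝ)..h, (f (x + t) - f (x - t)) := by
  rw [integral_sub ((by fun_prop : Continuous fun t => f (x + t)).intervalIntegrable _ _)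
      ((by fun_prop : Continuous fun t => f (x - t)).intervalIntegrable _ _),
    integral_comp_add_left f x, integral_comp_sub_left f x, add_zero, sub_zero,
    integral_eq_sub_of_hasDerivAt (fun t _ => hF t) (hf.intervalIntegrable _ _),
    integral_eq_sub_of_hasDerivAt (fun t _ => hF t) (hf.intervalIntegrable _ _)]
  ring

theorem add_sub_two_mul_le_of_deriv_le {u : ℝ} (hF : ∀ t, HasDerivAt F (f t) t)
    (hf : ∀ t, HasDerivAt f (g t) t) (hh : 0 ≤ h) (hg : ∀ s ∈ Icc (x - h) (x + h), g s ≤ u) :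
    F (x + h) + F (x - h) - 2 * F x ≤ u * h ^ 2 := by
  have hf_cont : Continuous f := continuous_iff_continuousAt.2 fun t => (hf t).continuousAt
  have h_symm_diff : ∀ t ∈ Icc 0 h, f (x + t) - f (x - t) ≤ 2 * u * t := by
    rintro t ⟨ht0, hth⟩
    have := (convex_Icc (x - h) (x + h)).image_sub_le_mul_sub_of_deriv_le
      hf_cont.continuousOn (fun s _ => (hf s).differentiableAt.differentiableWithinAt)
      (fun s hs => (hf s).deriv ▸ hg s (interior_subset hs))
      (x - t) ⟨by linarith, by linarith⟩ (x + t) ⟨by linarith, by linarith⟩ (by linarith)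
    linarith
  calc F (x + h) + F (x - h) - 2 * F x = ∫ t in (0 : ℝ)..h, (f (x + t) - f (x - t)) :=
        add_sub_two_mul_eq_integral hF hf_cont
    _ ≤ ∫ t in (0 : ℝ)..h, 2 * u * t :=
        integral_mono_on hh
          ((by fun_prop : Continuous fun t => f (x + t) - f (x - t)).intervalIntegrable _ _)
          ((by fun_prop : Continuous fun t : ℝ => 2 * u * t).intervalIntegrable _ _) h_symm_diff
    _ = u * h ^ 2 := by
        rw [intervalIntegral.integral_const_mul, integral_id]
        ring

theorem le_add_sub_two_mul_of_le_deriv {l : ℝ} (hF : ∀ t, HasDerivAt F (f t) t)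
    (hf : ∀ t, HasDerivAt f (g t) t) (hh : 0 ≤ h) (hg : ∀ s ∈ Icc (x - h) (x + h), l ≤ g s) :
    l * h ^ 2 ≤ F (x + h) + F (x - h) - 2 * F x := by
  have := add_sub_two_mul_le_of_deriv_le (F := -F) (fun t => (hF t).neg) (fun t => (hf t).neg) hh
    (u := -l) fun s hs => neg_le_neg (hg s hs)
  simp only [Pi.neg_apply] at this
  linarith

theorem abs_add_sub_two_mul_le_of_abs_deriv_le {M : ℝ} (hF : ∀ t, HasDerivAt F (f t) t)
    (hf : ∀ t, HasDerivAt f (g t) t) (hh : 0 ≤ h) (hg : ∀ s, |g s| ≤ M) :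
    |F (x + h) + F (x - h) - 2 * F x| ≤ M * h ^ 2 := by
  have := le_add_sub_two_mul_of_le_deriv (x := x) hF hf hh fun s _ => (abs_le.1 (hg s)).1
  exact abs_le.2
    ⟨by linarith, add_sub_two_mul_le_of_deriv_le hF hf hh fun s _ => (abs_le.1 (hg s)).2⟩

end SecondDifference

noncomputable def stdNormalPDF (t : ℝ) : ℝ :=
  exp (-t ^ 2 / 2) / √(2 * π)

theorem stdNormalPDF_pos (t : ℝ) : 0 < stdNormalPDF t := by
  unfold stdNormalPDF
  positivity

theorem continuous_stdNormalPDF : Continuous stdNormalPDF := by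
  unfold stdNormalPDF
  fun_prop

theorem integrable_stdNormalPDF : Integrable stdNormalPDF := by
  convert (integrable_exp_neg_mul_sq (by norm_num : (0 : ℝ) < 1 / 2)).div_const (√(2 * π))
    using 1
  funext t
  rw [stdNormalPDF]
  ring_nf

theorem hasDerivAt_stdNormalPDF (t : ℝ) :
    HasDerivAt stdNormalPDF (-t * stdNormalPDF t) t := by
  have h := (((hasDerivAt_pow 2 t).fun_neg.div_const 2).exp).div_const (√(2 * π))
  exact h.congr_deriv (by rw [stdNormalPDF]; push_cast; ring)

theorem hasDerivAt_stdNormalCDF (x : ℝ) : HasDerivAt stdNormalCDF (stdNormalPDF x) x := by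
  have h_eq : stdNormalCDF = fun y => stdNormalCDF 0 + ∫ t in (0 : ℝ)..y, stdNormalPDF t := by
    funext y
    rw [← integral_Iic_sub_Iic integrable_stdNormalPDF.integrableOn
      integrable_stdNormalPDF.integrableOn]
    simp only [stdNormalCDF, stdNormalPDF]
    ring
  rw [h_eq]
  exact ((continuous_stdNormalPDF.integral_hasStrictDerivAt 0 x).hasDerivAt).const_add _

theorem stdNormalPDF_le_of_abs_le {a b : ℝ} (hab : |a| ≤ |b|) :
    stdNormalPDF b ≤ stdNormalPDF a := by
  have := sq_le_sq.2 hab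
  unfold stdNormalPDF
  gcongr exp ?_ / _
  linarith

theorem abs_mul_stdNormalPDF_le (s : ℝ) : |-s * stdNormalPDF s| ≤ stdNormalPDF 1 := by
  rw [abs_mul, abs_neg, abs_of_pos (stdNormalPDF_pos s)]
  -- `|s| ≤ exp ((s² - 1) / 2)` is `1 + y ≤ exp y` at `y = (s² - 1) / 2`
  have h_abs : |s| ≤ exp ((s ^ 2 - 1) / 2) := by
    nlinarith [add_one_le_exp ((s ^ 2 - 1) / 2), sq_abs s, sq_nonneg (|s| - 1)]
  calc |s| * stdNormalPDF s ≤ exp ((s ^ 2 - 1) / 2) * stdNormalPDF s :=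
        mul_le_mul_of_nonneg_right h_abs (stdNormalPDF_pos s).le
    _ = stdNormalPDF 1 := by
        unfold stdNormalPDF
        rw [mul_div_assoc', ← exp_add]
        ring_nf

theorem stdNormalPDF_one : stdNormalPDF 1 = 1 / √(2 * π * exp 1) := by
  rw [stdNormalPDF, sqrt_mul (by positivity : (0 : ℝ) ≤ 2 * π), ← exp_half, one_pow, neg_div,
    exp_neg]
  field_simp

theorem abs_midpoint_stdNormalCDF_sub_le (x : ℝ) {h : ℝ} (hh : 0 ≤ h) :
    |(1 / 2) * stdNormalCDF (x + h) + (1 / 2) * stdNormalCDF (x - h) - stdNormalCDF x|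
      ≤ stdNormalPDF 1 / 2 * h ^ 2 := by
  rw [show (1 / 2) * stdNormalCDF (x + h) + (1 / 2) * stdNormalCDF (x - h) - stdNormalCDF x
    = (stdNormalCDF (x + h) + stdNormalCDF (x - h) - 2 * stdNormalCDF x) / 2 by ring,
    abs_div, abs_two]
  linarith [abs_add_sub_two_mul_le_of_abs_deriv_le (x := x) hasDerivAt_stdNormalCDF
    hasDerivAt_stdNormalPDF hh abs_mul_stdNormalPDF_le]

theorem midpoint_stdNormalCDF_sub_at_one_le {h : ℝ} (hh0 : 0 ≤ h) (hh1 : h ≤ 1) :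
    (1 / 2) * stdNormalCDF (1 + h) + (1 / 2) * stdNormalCDF (1 - h) - stdNormalCDF 1
      ≤ -((1 - h) * stdNormalPDF (1 + h) / 2 * h ^ 2) := by
  have h_deriv : ∀ s ∈ Icc (1 - h) (1 + h),
      -s * stdNormalPDF s ≤ -((1 - h) * stdNormalPDF (1 + h)) := by
    rintro s ⟨hs1, hs2⟩
    have : stdNormalPDF (1 + h) ≤ stdNormalPDF s :=
      stdNormalPDF_le_of_abs_le (by rw [abs_of_nonneg (by linarith : 0 ≤ s),
        abs_of_nonneg (by linarith : 0 ≤ 1 + h)]; exact hs2)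
    nlinarith [stdNormalPDF_pos (1 + h)]
  linarith [add_sub_two_mul_le_of_deriv_le hasDerivAt_stdNormalCDF hasDerivAt_stdNormalPDF hh0
    h_deriv]

theorem first_order_worst_case_limit :
    Tendsto
      (fun Δ : ℝ =>
        (⨆ x : ℝ, |(1 / 2) * stdNormalCDF (x + Δ / 2) + (1 / 2) * stdNormalCDF (x - Δ / 2)
          - stdNormalCDF x|) / Δ ^ 2)
      (nhdsWithin 0 (Set.Ioi 0))
      (nhds (1 / (8 * Real.sqrt (2 * Real.pi * Real.exp 1)))) := by
  have h_upper : ∀ Δ, 0 ≤ Δ → ∀ x, |(1 / 2) * stdNormalCDF (x + Δ / 2)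
      + (1 / 2) * stdNormalCDF (x - Δ / 2) - stdNormalCDF x| ≤ stdNormalPDF 1 / 8 * Δ ^ 2 :=
    fun Δ hΔ x => (abs_midpoint_stdNormalCDF_sub_le x (by linarith)).trans_eq (by ring)
  have h_lower : Tendsto (fun Δ : ℝ => (1 - Δ / 2) * stdNormalPDF (1 + Δ / 2) / 8)
      (𝓝[>] 0) (𝓝 (stdNormalPDF 1 / 8)) := by
    have := continuous_stdNormalPDF
    simpa using ((by fun_prop : Continuous fun Δ : ℝ =>
      (1 - Δ / 2) * stdNormalPDF (1 + Δ / 2) / 8).tendsto 0).mono_left nhdsWithin_le_nhds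
  rw [← one_div_mul_one_div, ← stdNormalPDF_one, one_div_mul_eq_div]
  refine tendsto_of_tendsto_of_tendsto_of_le_of_le' h_lower tendsto_const_nhds ?_ ?_
  · filter_upwards [Ioo_mem_nhdsGT (by norm_num : (0 : ℝ) < 2)] with Δ ⟨hΔ0, hΔ2⟩
    rw [le_div_iff₀ (by positivity)]
    refine le_trans ?_ (le_ciSup ⟨_, forall_mem_range.2 (h_upper Δ hΔ0.le)⟩ 1)
    refine le_trans ?_ (neg_le_abs _)
    linarith [midpoint_stdNormalCDF_sub_at_one_le (h := Δ / 2) (by linarith) (by linarith)]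
  · filter_upwards [self_mem_nhdsWithin] with Δ (hΔ : 0 < Δ)
    rw [div_le_iff₀ (by positivity)]
    exact ciSup_le (h_upper Δ hΔ.le)
end

section
/- Suppose f : ℝ → ℝ is integrable with Fourier transform g(ω) = ∫ f(x)e^{iωx} dx vanishing for |ω| > W, and suppose f is continuous. Then for Δ = 1/(2W) (with the convention that the band limit is π/Δ in angular frequency), f is determined by its samples: f(x) = Σ_{n∈ℤ} f(nΔ)·sinc(π(x/Δ − n)) for all x, where sinc(t) = sin(t)/t. -/
/-!
The band limit puts the support of `𝓕 f` inside `[-W, W]`, an interval of length `2W = 1/Δ`.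
By Fourier inversion, the `n`-th Fourier coefficient of `𝓕 f` on that interval is `Δ f(-nΔ)`,
while the `n`-th Fourier coefficient of `ξ ↦ exp(-2πiξx)` is the real number
`sinc(π(x/Δ + n))`. Parseval's identity pairs the two expansions, and since `f x` is the
integral of `𝓕 f` against `ξ ↦ exp(2πiξx)` over `[-W, W]`, the pairing equals `Δ f(x)`.
-/

open MeasureTheory Filter Real

/-- The (unnormalised) sinc function, `sin t / t`, with value `1` at `t = 0`. -/
noncomputable def sinc (t : ℝ) : ℝ := if t = 0 then 1 else Real.sin t / t

open FourierTransform Set ComplexConjugate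
open Complex (I)

theorem hasSum_conj_fourierCoeffOn_mul_fourierCoeffOn {a b : ℝ} {f g : ℝ → ℂ} (hab : a < b)
    (hf : MemLp f 2 (volume.restrict (Ioc a b))) (hg : MemLp g 2 (volume.restrict (Ioc a b))) :
    HasSum (fun n => conj (fourierCoeffOn hab f n) * fourierCoeffOn hab g n)
      ((b - a)⁻¹ • ∫ x in a..b, conj (f x) * g x) := by
  have := Fact.mk (sub_pos.mpr hab)
  rw [← add_sub_cancel a b] at hf hg
  have hF := hf.memLp_liftIoc.haarAddCircle
  have hG := hg.memLp_liftIoc.haarAddCircle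
  have hcoeff {k : ℝ → ℂ}
      (hk : MemLp (AddCircle.liftIoc (b - a) a k) 2 AddCircle.haarAddCircle) (n : ℤ) :
      inner ℂ (fourierBasis n) hk.toLp = fourierCoeffOn hab k n := by
    rw [← fourierBasis.repr_apply_apply, fourierBasis_repr, fourierCoeff_congr_ae hk.coeFn_toLp,
      fourierCoeff_liftIoc_eq]
    simp only [add_sub_cancel]
  have hinner : inner ℂ hF.toLp hG.toLp = (b - a)⁻¹ • ∫ x in a..b, conj (f x) * g x := by
    have h := AddCircle.integral_liftIoc_eq_intervalIntegral (T := b - a) (t := a)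
      (f := fun x => conj (f x) * g x)
    rw [add_sub_cancel] at h
    rw [L2.inner_def, ← h, ← AddCircle.integral_haarAddCircle]
    apply integral_congr_ae
    filter_upwards [hF.coeFn_toLp, hG.coeFn_toLp] with x hx hy
    rw [RCLike.inner_apply, hx, hy]
    exact mul_comm _ _
  simpa only [← inner_conj_symm _ (fourierBasis _), hcoeff, hinner]
    using fourierBasis.hasSum_inner_mul_inner hF.toLp hG.toLp

theorem Real.mul_sinc_mul_eq_sin_div {a : ℝ} (ha : a ≠ 0) (W : ℝ) :
    W * Real.sinc (a * W) = sin (a * W) / a := by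
  rcases eq_or_ne W 0 with rfl | hW
  · simp
  · rw [sinc_of_ne_zero (mul_ne_zero ha hW)]
    field_simp

theorem integral_cexp_I_mul_eq_sinc (a W : ℝ) :
    ∫ ξ in -W..W, Complex.exp (I * a * ξ) = ((2 * W * Real.sinc (a * W) : ℝ) : ℂ) := by
  rcases eq_or_ne a 0 with rfl | ha
  · simp [two_mul]
  have ha' : (a : ℂ) ≠ 0 := by exact_mod_cast ha
  have hexp (t : ℝ) :
      Complex.exp (I * a * t) = Complex.cos (a * t) + Complex.sin (a * t) * I := by
    rw [← Complex.exp_mul_I]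
    ring_nf
  rw [integral_exp_mul_complex (mul_ne_zero Complex.I_ne_zero ha'), hexp, hexp,
    mul_assoc (2 : ℝ), Real.mul_sinc_mul_eq_sin_div ha]
  push_cast
  rw [mul_neg, Complex.cos_neg, Complex.sin_neg]
  field_simp
  ring

theorem hasSum_mul_sinc_of_eq_intervalIntegral {W : ℝ} (hW : 0 < W) {F g : ℝ → ℂ}
    (hF : MemLp F 2 (volume.restrict (Ioc (-W) W)))
    (hg : ∀ y, g y = ∫ ξ in -W..W, Complex.exp (2 * π * I * ξ * y) * F ξ) (x : ℝ) :
    HasSum (fun n : ℤ => g (n / (2 * W)) * Real.sinc (π * (2 * W * x - n))) (g x) := by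
  have hab : -W < W := by linarith
  set p : ℝ → ℂ := fun ξ => Complex.exp (-(2 * π * I * ξ * x)) with hp_def
  have hp : MemLp p 2 (volume.restrict (Ioc (-W) W)) :=
    MemLp.of_bound (by fun_prop : Continuous p).aestronglyMeasurable 1
      (ae_of_all _ fun ξ => by simp [hp_def, Complex.norm_exp])
  have hcoeffF (n : ℤ) : fourierCoeffOn hab F n = (1 / (2 * W)) • g ((-n : ℤ) / (2 * W)) := by
    rw [fourierCoeffOn_eq_integral, hg, sub_neg_eq_add, ← two_mul]
    congr 2 with ξ
    rw [fourier_coe_apply, smul_eq_mul]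
    congr 2
    push_cast
    field_simp
  have hcoeffp (n : ℤ) :
      conj (fourierCoeffOn hab p n) = Real.sinc (π * (2 * W * x - (-n : ℤ))) := by
    have hexp (ξ : ℝ) : fourier (-n) (ξ : AddCircle (W - -W)) • p ξ
        = Complex.exp (I * ↑(-(2 * π * (x + n / (2 * W)))) * ξ) := by
      rw [fourier_coe_apply, smul_eq_mul, hp_def, ← Complex.exp_add]
      congr 1
      push_cast
      field_simp
      ring
    have harg : -(2 * π * (x + n / (2 * W))) * W = -(π * (2 * W * x - (-n : ℤ))) := by
      push_cast
      field_simp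
      ring
    simp only [fourierCoeffOn_eq_integral, hexp, integral_cexp_I_mul_eq_sinc, harg, sinc_neg,
      Complex.real_smul, ← Complex.ofReal_mul, Complex.conj_ofReal, sub_neg_eq_add, ← two_mul]
    congr 1
    field_simp
  have hval : ∫ ξ in -W..W, conj (p ξ) * F ξ = g x := by
    rw [hg]
    congr 1 with ξ
    simp [hp_def, ← Complex.exp_conj, map_ofNat]
  have key := hasSum_conj_fourierCoeffOn_mul_fourierCoeffOn hab hp hF
  simp only [hcoeffF, hcoeffp, hval, sub_neg_eq_add, ← two_mul] at key
  have h2W : (2 * W) • (2 * W)⁻¹ • g x = g x := by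
    rw [smul_smul, mul_inv_cancel₀ (by positivity), one_smul]
  rw [← h2W, ← (Equiv.neg ℤ).hasSum_iff]
  convert key.const_smul (2 * W) using 1
  ext n
  rw [Function.comp_apply, Equiv.neg_apply, mul_smul_comm, smul_smul,
    mul_one_div_cancel (by positivity), one_smul, mul_comm]

theorem Real.fourier_eq_integral_mul_cexp (f : ℝ → ℂ) (ξ : ℝ) :
    𝓕 f ξ = ∫ x, f x * Complex.exp (I * ↑(-2 * π * ξ) * x) := by
  rw [fourier_real_eq_integral_exp_smul]
  congr 1 with x
  rw [smul_eq_mul, mul_comm]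
  congr 2
  push_cast
  ring

theorem Real.continuous_fourier {f : ℝ → ℂ} (hf : Integrable f) : Continuous (𝓕 f) :=
  VectorFourier.fourierIntegral_continuous Real.continuous_fourierChar
    (innerSL ℝ).continuous₂ hf

theorem hasCompactSupport_of_forall_lt_abs {E : Type*} [Zero E] {g : ℝ → E} {W : ℝ}
    (h : ∀ ξ, W < |ξ| → g ξ = 0) : HasCompactSupport g :=
  HasCompactSupport.intro isCompact_Icc fun ξ hξ ↦
    h ξ <| by rwa [mem_Icc, ← abs_le, not_le] at hξ

theorem Continuous.eq_intervalIntegral_fourier_of_bandlimited {f : ℝ → ℂ}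
    (hf : Continuous f) (hL1 : Integrable f) {W : ℝ} (hW : 0 ≤ W)
    (hband : ∀ ξ, W < |ξ| → 𝓕 f ξ = 0) (y : ℝ) :
    f y = ∫ ξ in -W..W, Complex.exp (2 * π * I * ξ * y) * 𝓕 f ξ := by
  have hband' : ∀ ξ ∉ Icc (-W) W, 𝓕 f ξ = 0 := fun ξ hξ ↦ by
    rw [mem_Icc, ← abs_le, not_le] at hξ
    exact hband ξ hξ
  have h𝓕 : Integrable (𝓕 f) :=
    (Real.continuous_fourier hL1).integrable_of_hasCompactSupport
      (hasCompactSupport_of_forall_lt_abs hband)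
  rw [← congrFun (hf.fourierInv_fourier_eq hL1 h𝓕) y, Real.fourierInv_eq',
    intervalIntegral.integral_of_le (by linarith), ← integral_Icc_eq_integral_Ioc,
    setIntegral_eq_integral_of_forall_compl_eq_zero fun ξ hξ ↦ by rw [hband' ξ hξ, mul_zero]]
  congr! 2 with ξ
  rw [smul_eq_mul, RCLike.inner_apply, conj_trivial]
  push_cast
  ring_nf

theorem shannon_sampling_theorem_general
    (f : ℝ → ℂ) (hcont : Continuous f)
    (hL1 : Integrable f volume)
    (W Δ : ℝ) (hW : 0 < W) (hΔ : Δ = 1 / (2 * W))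
    (hband : ∀ ω : ℝ, Real.pi / Δ < |ω| →
      (∫ x : ℝ, f x * Complex.exp (Complex.I * ω * x)) = 0) :
    ∀ x : ℝ,
      Tendsto (fun N : ℕ => ∑ n ∈ Finset.Icc (-(N : ℤ)) (N : ℤ),
          f (n * Δ) * (_root_.sinc (Real.pi * (x / Δ - n)) : ℂ))
        atTop (nhds (f x)) := by
  intro x
  have h𝓕 (ξ : ℝ) (hξ : W < |ξ|) : 𝓕 f ξ = 0 := by
    rw [Real.fourier_eq_integral_mul_cexp]
    refine hband _ ?_
    rw [hΔ, abs_mul, abs_mul, abs_neg, abs_two, abs_of_pos pi_pos]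
    field_simp
    nlinarith [pi_pos]
  have hF : MemLp (𝓕 f) 2 (volume.restrict (Ioc (-W) W)) :=
    ((Real.continuous_fourier hL1).memLp_of_hasCompactSupport
      (hasCompactSupport_of_forall_lt_abs h𝓕)).restrict _
  have hsum := hasSum_mul_sinc_of_eq_intervalIntegral hW hF
    (hcont.eq_intervalIntegral_fourier_of_bandlimited hL1 hW.le h𝓕) x
  have hnodes (t : ℝ) : t * Δ = t / (2 * W) := by rw [hΔ, mul_one_div]
  have hx : x / Δ = 2 * W * x := by rw [hΔ]; field_simp
  simp only [← hnodes, ← hx] at hsum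
  exact hsum.comp Finset.tendsto_Icc_neg

theorem shannon_sampling_theorem
    (f : ℝ → ℂ) (hcont : Continuous f)
    (hL1 : Integrable f volume) (hL2 : MemLp f 2 volume)
    (W Δ : ℝ) (hW : 0 < W) (hΔ : Δ = 1 / (2 * W))
    (hband : ∀ ω : ℝ, Real.pi / Δ < |ω| →
      (∫ x : ℝ, f x * Complex.exp (Complex.I * ω * x)) = 0) :
    ∀ x : ℝ,
      Tendsto (fun N : ℕ => ∑ n ∈ Finset.Icc (-(N : ℤ)) (N : ℤ),
          f (n * Δ) * (_root_.sinc (Real.pi * (x / Δ - n)) : ℂ))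
        atTop (nhds (f x)) :=
  shannon_sampling_theorem_general f hcont hL1 W Δ hW hΔ hband
end
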